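/- Let w₁, …, w_D ∈ ℝ^d and define the random Fourier feature map φ̃(x) = D^{-1/2}(cos(w₁ᵀx), …, cos(w_Dᵀx), sin(w₁ᵀx), …, sin(w_Dᵀx)) ∈ ℝ^{2D}. Let W ∈ ℝ^{d×D} be the matrix with columns wⱼ. Then for all x, y ∈ ℝ^d, ‖φ̃(x) - φ̃(y)‖₂ ≤ (‖W‖₂/√D) ‖x - y‖₂, where ‖W‖₂ is the spectral norm. -/

import Mathlib

open scoped RealInnerProductSpace

/-- The random Fourier feature map
`φ̃(x) = D^{-1/2}(cos(w₁ᵀx), …, cos(w_Dᵀx), sin(w₁ᵀx), …, sin(w_Dᵀx)) ∈ ℝ^{2D}`. -/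
noncomputable def rffFeature (d D : ℕ) (w : Fin D → EuclideanSpace ℝ (Fin d))
    (z : EuclideanSpace ℝ (Fin d)) : EuclideanSpace ℝ (Fin D ⊕ Fin D) :=
  (Real.sqrt D)⁻¹ •
    (EuclideanSpace.equiv (Fin D ⊕ Fin D) ℝ).symm
      (Sum.elim (fun j => Real.cos ⟪w j, z⟫) (fun j => Real.sin ⟪w j, z⟫))

/-!
Writing `a j = ⟪w j, x⟫`, `b j = ⟪w j, y⟫`, each pair of cosine/sine coordinates contributes
`(cos a - cos b)² + (sin a - sin b)² = 2 - 2 cos (a - b) ≤ (a - b)² = ⟪w j, x - y⟫²`, using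
`1 - t²/2 ≤ cos t`. Summing over `j`, `∑ ⟪w j, z⟫²` is the squared norm of `Wᵀ z = W† z`, which is
at most `‖W‖² ‖z‖²`.
-/

open Real

theorem cos_sub_cos_sq_add_sin_sub_sin_sq_le (a b : ℝ) :
    (cos a - cos b) ^ 2 + (sin a - sin b) ^ 2 ≤ (a - b) ^ 2 := by
  have h : (cos a - cos b) ^ 2 + (sin a - sin b) ^ 2 = 2 - 2 * cos (a - b) := by
    rw [cos_sub]; nlinarith [sin_sq_add_cos_sq a, sin_sq_add_cos_sq b]
  linarith [one_sub_sq_div_two_le_cos (x := a - b)]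

section

variable {ι E : Type*} [Fintype ι] [NormedAddCommGroup E] [InnerProductSpace ℝ E]

noncomputable def cosSinFeature (w : ι → E) (z : E) : EuclideanSpace ℝ (ι ⊕ ι) :=
  (EuclideanSpace.equiv (ι ⊕ ι) ℝ).symm
    (Sum.elim (fun j => cos ⟪w j, z⟫) (fun j => sin ⟪w j, z⟫))

theorem norm_cosSinFeature_sub_sq (w : ι → E) (x y : E) :
    ‖cosSinFeature w x - cosSinFeature w y‖ ^ 2 =
      ∑ j, ((cos ⟪w j, x⟫ - cos ⟪w j, y⟫) ^ 2 + (sin ⟪w j, x⟫ - sin ⟪w j, y⟫) ^ 2) := by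
  rw [EuclideanSpace.real_norm_sq_eq, Fintype.sum_sum_type, ← Finset.sum_add_distrib]
  rfl

variable [DecidableEq ι] [CompleteSpace E]

theorem sum_inner_apply_single_sq_le (A : EuclideanSpace ℝ ι →L[ℝ] E) (z : E) :
    ∑ j, ⟪A (EuclideanSpace.single j 1), z⟫ ^ 2 ≤ ‖A‖ ^ 2 * ‖z‖ ^ 2 := by
  have hcoord (j : ι) : ⟪A (EuclideanSpace.single j 1), z⟫ = A.adjoint z j := by
    rw [← ContinuousLinearMap.adjoint_inner_right, EuclideanSpace.inner_single_left]
    simp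
  calc ∑ j, ⟪A (EuclideanSpace.single j 1), z⟫ ^ 2 = ‖A.adjoint z‖ ^ 2 := by
        simp only [hcoord, EuclideanSpace.real_norm_sq_eq]
    _ ≤ (‖A.adjoint‖ * ‖z‖) ^ 2 := by gcongr; exact A.adjoint.le_opNorm z
    _ = ‖A‖ ^ 2 * ‖z‖ ^ 2 := by rw [LinearIsometryEquiv.norm_map, mul_pow]

theorem norm_cosSinFeature_sub_le (A : EuclideanSpace ℝ ι →L[ℝ] E) (x y : E) :
    ‖cosSinFeature (fun j => A (EuclideanSpace.single j 1)) x -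
        cosSinFeature (fun j => A (EuclideanSpace.single j 1)) y‖ ≤ ‖A‖ * ‖x - y‖ := by
  refine pow_le_pow_iff_left₀ (norm_nonneg _) (by positivity) two_ne_zero |>.mp ?_
  rw [norm_cosSinFeature_sub_sq, mul_pow]
  refine le_trans (Finset.sum_le_sum fun j _ => ?_) (sum_inner_apply_single_sq_le A (x - y))
  rw [inner_sub_right]
  exact cos_sub_cos_sq_add_sin_sub_sin_sq_le _ _

theorem toEuclideanLin_of_columns_single {κ : Type*} [Fintype κ] (w : ι → EuclideanSpace ℝ κ)
    (j : ι) :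
    Matrix.toEuclideanLin (Matrix.of fun i j => w j i) (EuclideanSpace.single j 1) = w j := by
  ext i
  simp [Matrix.toLpLin_apply, Matrix.mulVec_single]

end

theorem rff_lipschitz_general (d D : ℕ)
    (w : Fin D → EuclideanSpace ℝ (Fin d)) (x y : EuclideanSpace ℝ (Fin d)) :
    ‖rffFeature d D w x - rffFeature d D w y‖ ≤
      ‖LinearMap.toContinuousLinearMap
        (Matrix.toEuclideanLin ((Matrix.of fun i j => w j i) : Matrix (Fin d) (Fin D) ℝ))‖ /
        Real.sqrt D * ‖x - y‖ := by
  set A := LinearMap.toContinuousLinearMap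
    (Matrix.toEuclideanLin ((Matrix.of fun i j => w j i) : Matrix (Fin d) (Fin D) ℝ))
  have hw : (fun j => A (EuclideanSpace.single j 1)) = w :=
    funext (toEuclideanLin_of_columns_single w)
  have hfeature (z) : rffFeature d D w z = (√D)⁻¹ • cosSinFeature w z := rfl
  rw [hfeature, hfeature, ← smul_sub, norm_smul, norm_inv, norm_of_nonneg (sqrt_nonneg _),
    div_eq_inv_mul, mul_assoc, ← hw]
  gcongr
  exact norm_cosSinFeature_sub_le A x y

theorem rff_lipschitz (d D : ℕ) (hD : 0 < D)
    (w : Fin D → EuclideanSpace ℝ (Fin d)) (x y : EuclideanSpace ℝ (Fin d)) :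
    ‖rffFeature d D w x - rffFeature d D w y‖ ≤
      ‖LinearMap.toContinuousLinearMap
        (Matrix.toEuclideanLin ((Matrix.of fun i j => w j i) : Matrix (Fin d) (Fin D) ℝ))‖ /
        Real.sqrt D * ‖x - y‖ :=
  rff_lipschitz_general d D w x y
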